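/- Let Ω = (0,1)×(1,2) ⊂ ℝ² and define z(x,y) = (3/5)·x^{2/3}·(1 − y^{5/3}/2^{5/3}). Then: (i) for every (x,y) ∈ Ω, z(x,y) + x·∂z/∂x(x,y) − y·∂z/∂y(x,y) = x^{2/3}; (ii) z(x,2) = 0 for every x ∈ (0,1); (iii) the Dirichlet integral ∫∫_Ω ((∂z/∂x)² + (∂z/∂y)²) dx dy is finite. -/

import Mathlib

/-! z is a power of x times a function of y, so x ∂z/∂x = (2/3) z, while
y ∂z/∂y = -x^{2/3} y^{5/3} / 2^{5/3}; adding up gives the transport equation. On Ω one has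
(∂z/∂y)² ≤ 1 and (∂z/∂x)² ≤ x^{-2/3}, and x^{-2/3} is integrable on (0,1) because 2/3 < 1. -/

open MeasureTheory Set Real

/-- The domain Ω = (0,1) × (1,2). -/
def Omega0 : Set (ℝ × ℝ) := Ioo (0:ℝ) 1 ×ˢ Ioo (1:ℝ) 2

/-- The explicit solution z(x,y) = (3/5)·x^{2/3}·(1 − y^{5/3}/2^{5/3}) of Example 1. -/
noncomputable def zEx1 : ℝ × ℝ → ℝ := fun p =>
  (3/5) * p.1 ^ ((2:ℝ)/3) * (1 - p.2 ^ ((5:ℝ)/3) / (2:ℝ) ^ ((5:ℝ)/3))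

/-- Partial derivative ∂z/∂x. -/
noncomputable def zEx1x (p : ℝ × ℝ) : ℝ := deriv (fun t => zEx1 (t, p.2)) p.1

/-- Partial derivative ∂z/∂y. -/
noncomputable def zEx1y (p : ℝ × ℝ) : ℝ := deriv (fun t => zEx1 (p.1, t)) p.2


namespace MeasureTheory

variable {α β E : Type*} [MeasurableSpace α] [MeasurableSpace β] [NormedAddCommGroup E]
  {μ : Measure α} {ν : Measure β} [SFinite μ] [SFinite ν]

theorem IntegrableOn.comp_fst_prod {f : α → E} {s : Set α} {t : Set β}
    (hf : IntegrableOn f s μ) (ht : ν t ≠ ⊤) :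
    IntegrableOn (fun p : α × β => f p.1) (s ×ˢ t) (μ.prod ν) := by
  have : IsFiniteMeasure (ν.restrict t) := isFiniteMeasure_restrict.mpr ht
  rw [IntegrableOn, ← Measure.prod_restrict]
  exact hf.comp_fst _

end MeasureTheory

section

variable {x y : ℝ}

theorem hasDerivAt_zEx1_fst (hx : 0 < x) (y : ℝ) :
    HasDerivAt (fun t => zEx1 (t, y))
      (2 / 5 * x ^ (-(1:ℝ) / 3) * (1 - y ^ ((5:ℝ) / 3) / 2 ^ ((5:ℝ) / 3))) x := by
  have h := ((hasDerivAt_rpow_const (p := (2:ℝ) / 3) (Or.inl hx.ne')).const_mul (3 / 5)).mul_const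
    (1 - y ^ ((5:ℝ) / 3) / 2 ^ ((5:ℝ) / 3))
  rw [show (2:ℝ) / 3 - 1 = -1 / 3 by norm_num] at h
  exact h.congr_deriv (by ring)

theorem hasDerivAt_zEx1_snd (x : ℝ) (hy : 0 < y) :
    HasDerivAt (fun t => zEx1 (x, t)) (-(x ^ ((2:ℝ) / 3) * y ^ ((2:ℝ) / 3) / 2 ^ ((5:ℝ) / 3))) y := by
  have h := (((hasDerivAt_rpow_const (p := (5:ℝ) / 3) (Or.inl hy.ne')).div_const
    (2 ^ ((5:ℝ) / 3))).const_sub 1).const_mul (3 / 5 * x ^ ((2:ℝ) / 3))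
  rw [show (5:ℝ) / 3 - 1 = 2 / 3 by norm_num] at h
  exact h.congr_deriv (by ring)

theorem zEx1x_eq (hx : 0 < x) (y : ℝ) :
    zEx1x (x, y) = 2 / 5 * x ^ (-(1:ℝ) / 3) * (1 - y ^ ((5:ℝ) / 3) / 2 ^ ((5:ℝ) / 3)) :=
  (hasDerivAt_zEx1_fst hx y).deriv

theorem zEx1y_eq (x : ℝ) (hy : 0 < y) :
    zEx1y (x, y) = -(x ^ ((2:ℝ) / 3) * y ^ ((2:ℝ) / 3) / 2 ^ ((5:ℝ) / 3)) :=
  (hasDerivAt_zEx1_snd x hy).deriv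

theorem zEx1_add_transport_eq (hx : 0 < x) (hy : 0 < y) :
    zEx1 (x, y) + x * zEx1x (x, y) - y * zEx1y (x, y) = x ^ ((2:ℝ) / 3) := by
  have hx' : x * x ^ (-(1:ℝ) / 3) = x ^ ((2:ℝ) / 3) := by
    rw [show (2:ℝ) / 3 = -1 / 3 + 1 by norm_num, rpow_add_one hx.ne', mul_comm]
  have hy' : y * y ^ ((2:ℝ) / 3) = y ^ ((5:ℝ) / 3) := by
    rw [show (5:ℝ) / 3 = 2 / 3 + 1 by norm_num, rpow_add_one hy.ne', mul_comm]
  rw [zEx1x_eq hx, zEx1y_eq x hy, zEx1]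
  linear_combination (2 / 5 * (1 - y ^ ((5:ℝ) / 3) / 2 ^ ((5:ℝ) / 3))) * hx' +
    (x ^ ((2:ℝ) / 3) / 2 ^ ((5:ℝ) / 3)) * hy'

theorem zEx1x_sq_le (hx : 0 < x) (hy₀ : 0 ≤ y) (hy₂ : y ≤ 2) :
    zEx1x (x, y) ^ 2 ≤ x ^ (-(2:ℝ) / 3) := by
  have hsq : (x ^ (-(1:ℝ) / 3)) ^ 2 = x ^ (-(2:ℝ) / 3) := by
    rw [← rpow_natCast, ← rpow_mul hx.le]
    norm_num
  set v := y ^ ((5:ℝ) / 3) / 2 ^ ((5:ℝ) / 3)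
  have hv₀ : 0 ≤ v := by positivity
  have hv₁ : v ≤ 1 := div_le_one_of_le₀ (rpow_le_rpow hy₀ hy₂ (by norm_num)) (by positivity)
  calc zEx1x (x, y) ^ 2 = 4 / 25 * (1 - v) ^ 2 * x ^ (-(2:ℝ) / 3) := by
        rw [zEx1x_eq hx, ← hsq]
        ring
    _ ≤ 1 * x ^ (-(2:ℝ) / 3) := by
        gcongr
        nlinarith
    _ = x ^ (-(2:ℝ) / 3) := one_mul _

theorem zEx1y_sq_le (hx₀ : 0 ≤ x) (hx₁ : x ≤ 1) (hy : 0 < y) (hy₂ : y ≤ 2) :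
    zEx1y (x, y) ^ 2 ≤ 1 := by
  have hy' : y ^ ((2:ℝ) / 3) ≤ 2 ^ ((5:ℝ) / 3) :=
    (rpow_le_rpow hy.le hy₂ (by norm_num)).trans
      (rpow_le_rpow_of_exponent_le one_le_two (by norm_num))
  have hq : x ^ ((2:ℝ) / 3) * y ^ ((2:ℝ) / 3) ≤ 2 ^ ((5:ℝ) / 3) :=
    (mul_le_mul (rpow_le_one hx₀ hx₁ (by norm_num)) hy' (by positivity) zero_le_one).trans_eq
      (one_mul _)
  rw [zEx1y_eq x hy, neg_sq]
  exact pow_le_one₀ (by positivity) (div_le_one_of_le₀ hq (by positivity))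

end

theorem zEx1_grad_sq_le {p : ℝ × ℝ} (hp : p ∈ Omega0) :
    zEx1x p ^ 2 + zEx1y p ^ 2 ≤ p.1 ^ (-(2:ℝ) / 3) + 1 := by
  obtain ⟨⟨hx₀, hx₁⟩, ⟨hy₁, hy₂⟩⟩ := hp
  exact add_le_add (zEx1x_sq_le hx₀ (by linarith) hy₂.le)
    (zEx1y_sq_le hx₀.le hx₁.le (by linarith) hy₂.le)

theorem integrableOn_rpow_fst_add_one :
    IntegrableOn (fun p : ℝ × ℝ => p.1 ^ (-(2:ℝ) / 3) + 1) Omega0 := by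
  have h : IntegrableOn (fun x : ℝ => x ^ (-(2:ℝ) / 3) + 1) (Ioo 0 1) :=
    ((intervalIntegral.integrableOn_Ioo_rpow_iff one_pos).mpr (by norm_num)).add
      (integrableOn_const (by simp))
  exact h.comp_fst_prod (by simp [volume_Ioo])

theorem lintegral_zEx1_grad_sq_lt_top :
    ∫⁻ p in Omega0, ENNReal.ofReal (zEx1x p ^ 2 + zEx1y p ^ 2) < ⊤ :=
  calc ∫⁻ p in Omega0, ENNReal.ofReal (zEx1x p ^ 2 + zEx1y p ^ 2)
      ≤ ∫⁻ p in Omega0, ENNReal.ofReal (p.1 ^ (-(2:ℝ) / 3) + 1) :=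
        setLIntegral_mono (by fun_prop) fun _ hp => ENNReal.ofReal_le_ofReal (zEx1_grad_sq_le hp)
    _ < ⊤ := integrableOn_rpow_fst_add_one.setLIntegral_lt_top

theorem stmt_0 :
    (∀ p ∈ Omega0, zEx1 p + p.1 * zEx1x p - p.2 * zEx1y p = p.1 ^ ((2:ℝ)/3)) ∧
    (∀ x ∈ Ioo (0:ℝ) 1, zEx1 (x, 2) = 0) ∧
    (∫⁻ p in Omega0, ENNReal.ofReal ((zEx1x p) ^ 2 + (zEx1y p) ^ 2) < ⊤) := by
  refine ⟨?_, fun x _ => ?_, lintegral_zEx1_grad_sq_lt_top⟩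
  · rintro ⟨x, y⟩ ⟨⟨hx, -⟩, ⟨hy, -⟩⟩
    exact zEx1_add_transport_eq hx (zero_lt_one.trans hy)
  · simp [zEx1]
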